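/- Let f : I → ℝ be convex and strictly increasing on an open interval I, with everywhere positive one-sided derivatives f′₊ and f′₋. Suppose a : I² → ℝ satisfies f((x+v)/2) − f((u+v)/2) ≤ a(u,v)(f(x)−f(u)) for all x, u, v ∈ I with x ≠ u. Then f′₊((u+v)/2)/(2 f′₊(u)) ≤ a(u,v) ≤ f′₋((u+v)/2)/(2 f′₋(u)) for all u, v ∈ I. -/

import Mathlib

/-! Dividing the hypothesis by `x - u` compares the difference quotients of `x ↦ f ((x + v) / 2)`
and of `f` at `u`; letting `x → u⁺` gives `f′₊((u + v) / 2) / 2 ≤ a u v · f′₊(u)`, and letting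
`x → u⁻`, where `x - u < 0` reverses the inequality, gives `a u v · f′₋(u) ≤ f′₋((u + v) / 2) / 2`. -/

open Filter Set Topology

section OneSidedDerivative

variable {f g : ℝ → ℝ} {f' g' c u : ℝ}

theorem le_mul_of_hasDerivWithinAt_Ioi (hg : HasDerivWithinAt g g' (Ioi u) u)
    (hf : HasDerivWithinAt f f' (Ioi u) u)
    (h : ∀ᶠ x in 𝓝[>] u, g x - g u ≤ c * (f x - f u)) : g' ≤ c * f' := by
  rw [hasDerivWithinAt_iff_tendsto_slope' self_notMem_Ioi] at hf hg
  refine le_of_tendsto_of_tendsto hg (hf.const_mul c) ?_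
  filter_upwards [h, self_mem_nhdsWithin] with x hx (hux : u < x)
  rw [slope_def_field, slope_def_field, ← mul_div_assoc]
  exact div_le_div_of_nonneg_right hx (sub_pos.2 hux).le

theorem mul_le_of_hasDerivWithinAt_Iio (hg : HasDerivWithinAt g g' (Iio u) u)
    (hf : HasDerivWithinAt f f' (Iio u) u)
    (h : ∀ᶠ x in 𝓝[<] u, g x - g u ≤ c * (f x - f u)) : c * f' ≤ g' := by
  rw [hasDerivWithinAt_iff_tendsto_slope' self_notMem_Iio] at hf hg
  refine le_of_tendsto_of_tendsto (hf.const_mul c) hg ?_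
  filter_upwards [h, self_mem_nhdsWithin] with x hx (hxu : x < u)
  rw [slope_def_field, slope_def_field, ← mul_div_assoc]
  exact div_le_div_of_nonpos_of_le (sub_neg.2 hxu).le hx

end OneSidedDerivative

section Midpoint

variable {f : ℝ → ℝ} {f' u v : ℝ}

theorem hasDerivAt_add_const_div_two (v x : ℝ) :
    HasDerivAt (fun x => (x + v) / 2) (1 / 2) x := by
  simpa using ((hasDerivAt_id x).add_const v).div_const 2

theorem HasDerivWithinAt.comp_add_const_div_two_Ioi
    (hf : HasDerivWithinAt f f' (Ioi ((u + v) / 2)) ((u + v) / 2)) :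
    HasDerivWithinAt (fun x => f ((x + v) / 2)) (f' / 2) (Ioi u) u := by
  have hmaps : MapsTo (fun x => (x + v) / 2) (Ioi u) (Ioi ((u + v) / 2)) := fun x (hx : u < x) =>
    show (u + v) / 2 < (x + v) / 2 by linarith
  rw [← mul_one_div]
  exact hf.comp u (hasDerivAt_add_const_div_two v u).hasDerivWithinAt hmaps

theorem HasDerivWithinAt.comp_add_const_div_two_Iio
    (hf : HasDerivWithinAt f f' (Iio ((u + v) / 2)) ((u + v) / 2)) :
    HasDerivWithinAt (fun x => f ((x + v) / 2)) (f' / 2) (Iio u) u := by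
  have hmaps : MapsTo (fun x => (x + v) / 2) (Iio u) (Iio ((u + v) / 2)) := fun x (hx : x < u) =>
    show (x + v) / 2 < (u + v) / 2 by linarith
  rw [← mul_one_div]
  exact hf.comp u (hasDerivAt_add_const_div_two v u).hasDerivWithinAt hmaps

end Midpoint

theorem Convex.add_div_two_mem {I : Set ℝ} (hI : Convex ℝ I) {u v : ℝ} (hu : u ∈ I)
    (hv : v ∈ I) : (u + v) / 2 ∈ I := by
  convert hI.midpoint_mem hu hv using 1
  rw [midpoint_eq_smul_add, smul_eq_mul]
  norm_num [div_eq_inv_mul]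

theorem stmt_10 (I : Set ℝ) (hIop : IsOpen I) (hIcv : Convex ℝ I)
    (f : ℝ → ℝ)
    (fp fm : ℝ → ℝ)
    (hfp : ∀ u ∈ I, HasDerivWithinAt f (fp u) (Set.Ioi u) u)
    (hfm' : ∀ u ∈ I, HasDerivWithinAt f (fm u) (Set.Iio u) u)
    (hfppos : ∀ u ∈ I, 0 < fp u) (hfmpos : ∀ u ∈ I, 0 < fm u)
    (a : ℝ → ℝ → ℝ)
    (ha : ∀ x ∈ I, ∀ u ∈ I, ∀ v ∈ I, x ≠ u →
      f ((x + v) / 2) - f ((u + v) / 2) ≤ a u v * (f x - f u)) :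
    ∀ u ∈ I, ∀ v ∈ I,
      fp ((u + v) / 2) / (2 * fp u) ≤ a u v ∧
      a u v ≤ fm ((u + v) / 2) / (2 * fm u) := by
  intro u hu v hv
  have hm := hIcv.add_div_two_mem hu hv
  have hI : ∀ᶠ x in 𝓝 u, x ∈ I := hIop.mem_nhds hu
  have hright : fp ((u + v) / 2) / 2 ≤ a u v * fp u := by
    refine le_mul_of_hasDerivWithinAt_Ioi (hfp _ hm).comp_add_const_div_two_Ioi (hfp u hu) ?_
    filter_upwards [nhdsWithin_le_nhds hI, self_mem_nhdsWithin] with x hx (hux : u < x)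
    exact ha x hx u hu v hv hux.ne'
  have hleft : a u v * fm u ≤ fm ((u + v) / 2) / 2 := by
    refine mul_le_of_hasDerivWithinAt_Iio (hfm' _ hm).comp_add_const_div_two_Iio (hfm' u hu) ?_
    filter_upwards [nhdsWithin_le_nhds hI, self_mem_nhdsWithin] with x hx (hxu : x < u)
    exact ha x hx u hu v hv hxu.ne
  have hfpu := hfppos u hu
  have hfmu := hfmpos u hu
  constructor
  · rw [div_le_iff₀ (by positivity)]; linarith
  · rw [le_div_iff₀ (by positivity)]; linarith
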